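/- Let (A, ·) be an associative superalgebra over a field of characteristic zero and let R : A → A be a Rota-Baxter operator of weight −1 on A. Define, for homogeneous x, y ∈ A, [x,y] := R(x)y − (−1)^{|x||y|} y R(x) − xy + x R(y) − (−1)^{|x||y|} R(y) x + (−1)^{|x||y|} y x. Then (A, [·,·]) is a Lie superalgebra and R is a Rota-Baxter operator of weight −1 on it, i.e. [R(x),R(y)] = R([R(x),y] − (−1)^{|x||y|}[R(y),x] − [x,y]) for all homogeneous x, y. -/
import Mathlib

/-- The super sign `(−1)^{|x||y|}` for parities `i`, `j`. -/
def sgn (K : Type*) [Field K] (i j : ZMod 2) : K := (-1 : K) ^ (i.val * j.val)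

/-- The bracket `[x,y] = R(x)y − (−1)^{|x||y|} y R(x) − xy + x R(y) − (−1)^{|x||y|} R(y) x
    + (−1)^{|x||y|} y x` on homogeneous elements of parities `i`, `j`. -/
def brRB {K A : Type*} [Field K] [AddCommGroup A] [Module K A]
    (mul : A →ₗ[K] A →ₗ[K] A) (R : A →ₗ[K] A) (i j : ZMod 2) (x y : A) : A :=
  mul (R x) y - sgn K i j • mul y (R x) - mul x y + mul x (R y)
    - sgn K i j • mul (R y) x + sgn K i j • mul y x

lemma sgn00 (K : Type*) [Field K] : sgn K 0 0 = 1 := by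
  norm_num [sgn, show ((0:ZMod 2)).val = 0 from rfl]
lemma sgn01 (K : Type*) [Field K] : sgn K 0 1 = 1 := by
  norm_num [sgn, show ((0:ZMod 2)).val = 0 from rfl]
lemma sgn10 (K : Type*) [Field K] : sgn K 1 0 = 1 := by
  norm_num [sgn, show ((0:ZMod 2)).val = 0 from rfl]
lemma sgn11 (K : Type*) [Field K] : sgn K 1 1 = -1 := by
  norm_num [sgn, show ((1:ZMod 2)).val = 1 from rfl]

lemma zmod2cases (a : ZMod 2) : a = 0 ∨ a = 1 := by revert a; decide

lemma z00 : (0 + 0 : ZMod 2) = 0 := by decide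
lemma z01 : (0 + 1 : ZMod 2) = 1 := by decide
lemma z10 : (1 + 0 : ZMod 2) = 1 := by decide
lemma z11 : (1 + 1 : ZMod 2) = 0 := by decide

/-- if `R` is a Rota-Baxter operator of weight `−1` on an associative
superalgebra `A`, then the bracket above makes `A` a Lie superalgebra and `R` is a
Rota-Baxter operator of weight `−1` on it. -/
theorem stmt1 {K A : Type*} [Field K] [CharZero K] [AddCommGroup A] [Module K A]
    (𝒜 : ZMod 2 → Submodule K A) (hgr : DirectSum.IsInternal 𝒜)
    (mul : A →ₗ[K] A →ₗ[K] A)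
    (hmul_even : ∀ (i j : ZMod 2), ∀ x ∈ 𝒜 i, ∀ y ∈ 𝒜 j, mul x y ∈ 𝒜 (i + j))
    (hassoc : ∀ (i j k : ZMod 2), ∀ x ∈ 𝒜 i, ∀ y ∈ 𝒜 j, ∀ z ∈ 𝒜 k,
      mul (mul x y) z = mul x (mul y z))
    (R : A →ₗ[K] A) (hR : ∀ (i : ZMod 2), ∀ x ∈ 𝒜 i, R x ∈ 𝒜 i)
    (hRB : ∀ (i j : ZMod 2), ∀ x ∈ 𝒜 i, ∀ y ∈ 𝒜 j,
      mul (R x) (R y) = R (mul (R x) y + mul x (R y) + (-1 : K) • mul x y)) :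
    -- the bracket is even
    (∀ (i j : ZMod 2), ∀ x ∈ 𝒜 i, ∀ y ∈ 𝒜 j, brRB mul R i j x y ∈ 𝒜 (i + j)) ∧
    -- super skew-symmetry
    (∀ (i j : ZMod 2), ∀ x ∈ 𝒜 i, ∀ y ∈ 𝒜 j,
      brRB mul R i j x y = -(sgn K i j • brRB mul R j i y x)) ∧
    -- super-Jacobi identity
    (∀ (i j k : ZMod 2), ∀ x ∈ 𝒜 i, ∀ y ∈ 𝒜 j, ∀ z ∈ 𝒜 k,
      brRB mul R i (j + k) x (brRB mul R j k y z)
        = brRB mul R (i + j) k (brRB mul R i j x y) z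
          + sgn K i j • brRB mul R j (i + k) y (brRB mul R i k x z)) ∧
    -- R is a Rota-Baxter operator of weight −1 on the Lie superalgebra
    (∀ (i j : ZMod 2), ∀ x ∈ 𝒜 i, ∀ y ∈ 𝒜 j,
      brRB mul R i j (R x) (R y)
        = R (brRB mul R i j (R x) y - sgn K i j • brRB mul R j i (R y) x
            - brRB mul R i j x y)) := by
  classical
  -- the descendant associative product
  set C : A →ₗ[K] A →ₗ[K] A := mul ∘ₗ R + mul.compl₂ R - mul with hCdef
  have hCapp : ∀ x y : A, C x y = mul (R x) y + mul x (R y) - mul x y := by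
    intro x y
    simp [hCdef, LinearMap.compl₂_apply]
  -- R of a circ-product
  have hRC : ∀ (i j : ZMod 2), ∀ x ∈ 𝒜 i, ∀ y ∈ 𝒜 j,
      R (C x y) = mul (R x) (R y) := by
    intro i j x hx y hy
    have h : C x y = mul (R x) y + mul x (R y) + (-1 : K) • mul x y := by
      rw [hCapp, neg_one_smul]; abel
    rw [h, ← hRB i j x hx y hy]
  -- associativity of the descendant product (on homogeneous elements)
  have hCassoc : ∀ (i j k : ZMod 2), ∀ x ∈ 𝒜 i, ∀ y ∈ 𝒜 j, ∀ z ∈ 𝒜 k,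
      C (C x y) z = C x (C y z) := by
    intro i j k x hx y hy z hz
    have hx' := hR i x hx
    have hy' := hR j y hy
    have hz' := hR k z hz
    rw [hCapp (C x y) z, hCapp x (C y z), hRC i j x hx y hy, hRC j k y hy z hz,
      hCapp x y, hCapp y z]
    simp only [map_add, map_sub, LinearMap.add_apply, LinearMap.sub_apply]
    rw [hassoc i j k _ hx' _ hy' _ hz,
        hassoc i j k _ hx' _ hy _ hz',
        hassoc i j k _ hx _ hy' _ hz',
        hassoc i j k _ hx _ hy _ hz',
        hassoc i j k _ hx' _ hy _ hz,
        hassoc i j k _ hx _ hy' _ hz,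
        hassoc i j k _ hx _ hy _ hz]
    abel
  -- bracket in terms of the descendant product
  have hbr : ∀ (i j : ZMod 2) (x y : A),
      brRB mul R i j x y = C x y - sgn K i j • C y x := by
    intro i j x y
    simp only [brRB, hCapp, smul_sub, smul_add]
    abel
  -- RB identity for the descendant product
  have hRBC : ∀ (i j : ZMod 2), ∀ x ∈ 𝒜 i, ∀ y ∈ 𝒜 j,
      C (R x) (R y) = R (C (R x) y + C x (R y) - C x y) := by
    intro i j x hx y hy
    have hx' := hR i x hx
    have hy' := hR j y hy
    rw [hCapp (R x) (R y), hRB i j x hx y hy, hRB i j _ hx' y hy, hRB i j x hx _ hy',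
      ← map_add, ← map_sub]
    congr 1
    simp only [hCapp, neg_one_smul]
    abel
  refine ⟨?_, ?_, ?_, ?_⟩
  · -- evenness
    intro i j x hx y hy
    have hx' := hR i x hx
    have hy' := hR j y hy
    have h1 : mul (R x) y ∈ 𝒜 (i + j) := hmul_even i j _ hx' _ hy
    have h2 : mul y (R x) ∈ 𝒜 (i + j) := add_comm j i ▸ hmul_even j i _ hy _ hx'
    have h3 : mul x y ∈ 𝒜 (i + j) := hmul_even i j _ hx _ hy
    have h4 : mul x (R y) ∈ 𝒜 (i + j) := hmul_even i j _ hx _ hy'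
    have h5 : mul (R y) x ∈ 𝒜 (i + j) := add_comm j i ▸ hmul_even j i _ hy' _ hx
    have h6 : mul y x ∈ 𝒜 (i + j) := add_comm j i ▸ hmul_even j i _ hy _ hx
    exact Submodule.add_mem _
      (Submodule.sub_mem _
        (Submodule.add_mem _
          (Submodule.sub_mem _ (Submodule.sub_mem _ h1 (Submodule.smul_mem _ _ h2)) h3) h4)
        (Submodule.smul_mem _ _ h5))
      (Submodule.smul_mem _ _ h6)
  · -- skew-symmetry
    intro i j x hx y hy
    rw [hbr, hbr]
    rcases zmod2cases i with rfl | rfl <;> rcases zmod2cases j with rfl | rfl <;>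
      simp only [sgn00, sgn01, sgn10, sgn11, one_smul, neg_one_smul, neg_sub, sub_neg_eq_add,
        smul_neg] <;> abel
  · -- super-Jacobi
    intro i j k x hx y hy z hz
    simp only [hbr]
    simp only [map_sub, map_smul, LinearMap.sub_apply, LinearMap.smul_apply,
      smul_sub, smul_smul]
    rw [hCassoc j k i y hy z hz x hx, hCassoc k j i z hz y hy x hx,
        hCassoc i j k x hx y hy z hz, hCassoc j i k y hy x hx z hz,
        hCassoc i k j x hx z hz y hy, hCassoc k i j z hz x hx y hy]
    rcases zmod2cases i with rfl | rfl <;> rcases zmod2cases j with rfl | rfl <;>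
      rcases zmod2cases k with rfl | rfl <;>
      simp only [z00, z01, z10, z11, sgn00, sgn01, sgn10, sgn11, one_smul, neg_one_smul,
        one_mul, mul_one, neg_mul, mul_neg, neg_neg, smul_neg, neg_smul] <;> abel
  · -- R is Rota-Baxter on the bracket
    intro i j x hx y hy
    simp only [hbr]
    rw [hRBC i j x hx y hy, hRBC j i y hy x hx]
    rcases zmod2cases i with rfl | rfl <;> rcases zmod2cases j with rfl | rfl <;>
      simp only [sgn00, sgn01, sgn10, sgn11, one_smul, neg_one_smul, smul_neg, neg_neg,
        map_add, map_sub, map_neg, sub_neg_eq_add, neg_sub] <;> abel
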